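/- arXiv:1610.06199 — 7 statements merged into one kernel-verified Lean document; each statement's English description precedes it below -/
import Mathlib

section
/- Let U be a finite set (universe), let O be a finite collection of finite subsets of U (the optimal collection) with |O| ≤ k, and let S be another finite collection of finite subsets of U. Let C = ⋃_{T ∈ S} T. If every set T ∈ O \ S satisfies |T \ C| ≤ z/(2k) for some real z ≥ |⋃_{T ∈ O} T|, then |C| ≥ |⋃_{T ∈ O} T| − z/2. -/
theorem stmt_5 {U : Type*} [DecidableEq U] (O S : Finset (Finset U))
    (k : ℕ) (hk : 0 < k) (hO : O.card ≤ k) (z : ℝ)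
    (hz : ((O.sup id).card : ℝ) ≤ z)
    (hthresh : ∀ T ∈ O \ S, ((T \ S.sup id).card : ℝ) ≤ z / (2 * k)) :
    ((S.sup id).card : ℝ) ≥ ((O.sup id).card : ℝ) - z / 2 := by
  set C := S.sup id with hC
  set D := (O \ S).sup (fun T => T \ C) with hD
  have hsub : O.sup id ⊆ C ∪ D := by
    intro x hx
    rw [Finset.mem_sup] at hx
    obtain ⟨T, hT, hxT⟩ := hx
    by_cases hxC : x ∈ C
    · exact Finset.mem_union_left _ hxC
    · by_cases hTS : T ∈ S
      · exact absurd (Finset.mem_sup.2 ⟨T, hTS, hxT⟩) hxC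
      · refine Finset.mem_union_right _ (Finset.mem_sup.2 ⟨T, ?_, ?_⟩)
        · exact Finset.mem_sdiff.2 ⟨hT, hTS⟩
        · exact Finset.mem_sdiff.2 ⟨hxT, hxC⟩
  have h1 : (O.sup id).card ≤ C.card + D.card :=
    le_trans (Finset.card_le_card hsub) (Finset.card_union_le _ _)
  have hDsum : (D.card : ℝ) ≤ ∑ T ∈ O \ S, ((T \ C).card : ℝ) := by
    have : D.card ≤ ∑ T ∈ O \ S, (T \ C).card := by
      rw [hD, Finset.sup_eq_biUnion]
      exact Finset.card_biUnion_le
    exact_mod_cast le_trans this le_rfl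
  have hz0 : 0 ≤ z := le_trans (by positivity) hz
  have h2 : ∑ T ∈ O \ S, ((T \ C).card : ℝ) ≤ (O \ S).card * (z / (2 * k)) := by
    calc ∑ T ∈ O \ S, ((T \ C).card : ℝ) ≤ ∑ T ∈ O \ S, z / (2 * k) :=
          Finset.sum_le_sum hthresh
      _ = (O \ S).card * (z / (2 * k)) := by rw [Finset.sum_const, nsmul_eq_mul]
  have hcard : ((O \ S).card : ℝ) ≤ k := by
    exact_mod_cast le_trans (Finset.card_le_card (Finset.sdiff_subset)) hO
  have h3 : ((O \ S).card : ℝ) * (z / (2 * k)) ≤ z / 2 := by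
    have hkpos : (0:ℝ) < k := by exact_mod_cast hk
    have step : ((O \ S).card : ℝ) * (z / (2 * k)) ≤ (k:ℝ) * (z / (2 * k)) :=
      mul_le_mul_of_nonneg_right hcard (by positivity)
    have : (k:ℝ) * (z / (2 * k)) = z / 2 := by field_simp
    linarith
  have := hDsum.trans (h2.trans h3)
  have h1' : ((O.sup id).card : ℝ) ≤ (C.card : ℝ) + (D.card : ℝ) := by exact_mod_cast h1
  linarith
end

section
/- Let U be a finite set, O a collection of at most k finite subsets of U, S another collection of subsets of U with union C. If z is a real with z ≤ (1+ε)·|⋃_{T∈O} T| and every T ∈ O \ S satisfies |T \ C| ≤ z/(2k), where 0 ≤ ε, then |C| ≥ ((1−ε)/2)·|⋃_{T∈O} T|. -/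
/-!
Every element covered by `O` but not by `C = ⋃ S` lies in `T \ C` for some `T ∈ O \ S`, so
`|⋃ O| ≤ |C| + ∑_{T ∈ O \ S} |T \ C|`. There are at most `k` such `T`, each contributing at most
`z / (2k)`, so the sum is at most `max z 0 / 2 ≤ (1 + ε) |⋃ O| / 2`, which rearranges to the claim.
-/

open Finset

namespace Finset

variable {α ι : Type*} [DecidableEq α]

theorem card_sup_le_card_sup_add_sum_card_sdiff (O S : Finset (Finset α)) :
    #(O.sup id) ≤ #(S.sup id) + ∑ T ∈ O \ S, #(T \ S.sup id) := by
  set C := S.sup id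
  have hcover : O.sup id \ C ⊆ (O \ S).biUnion (· \ C) := by
    intro x hx
    obtain ⟨hxO, hxC⟩ := mem_sdiff.1 hx
    obtain ⟨T, hT, hxT⟩ := mem_sup.1 hxO
    have hTS : T ∉ S := fun hTS => hxC (le_sup (f := id) hTS hxT)
    exact mem_biUnion.2 ⟨T, mem_sdiff.2 ⟨hT, hTS⟩, mem_sdiff.2 ⟨hxT, hxC⟩⟩
  calc #(O.sup id) ≤ #(O.sup id \ C) + #C := card_le_card_sdiff_add_card
    _ ≤ #((O \ S).biUnion (· \ C)) + #C := by gcongr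
    _ ≤ (∑ T ∈ O \ S, #(T \ C)) + #C := by gcongr; exact card_biUnion_le
    _ = #C + ∑ T ∈ O \ S, #(T \ C) := add_comm _ _

theorem sum_le_mul_max_zero_of_card_le {s : Finset ι} {f : ι → ℝ} {k : ℕ} {t : ℝ}
    (hs : #s ≤ k) (hf : ∀ i ∈ s, f i ≤ t) : ∑ i ∈ s, f i ≤ k * max t 0 :=
  calc ∑ i ∈ s, f i ≤ #s * max t 0 := by
        simpa using sum_le_card_nsmul s f _ fun i hi => (hf i hi).trans (le_max_left t 0)
    _ ≤ k * max t 0 := by gcongr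

end Finset

theorem natCast_mul_max_div_le (k : ℕ) (z : ℝ) : k * max (z / (2 * k)) 0 ≤ max z 0 / 2 := by
  rcases Nat.eq_zero_or_pos k with rfl | hk
  · simp only [CharP.cast_eq_zero, zero_mul]
    positivity
  · have hk : (0 : ℝ) < k := Nat.cast_pos.2 hk
    rw [mul_max_of_nonneg _ _ hk.le, mul_zero, mul_div_assoc', mul_comm (2 : ℝ),
      mul_div_mul_left _ _ hk.ne']
    exact max_le (by gcongr; exact le_max_left z 0) (by positivity)

theorem stmt_6_general {U : Type*} [DecidableEq U] (O S : Finset (Finset U))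
    (k : ℕ) (hO : O.card ≤ k) (z ε : ℝ) (hε : 0 ≤ ε)
    (hz : z ≤ (1 + ε) * ((O.sup id).card : ℝ))
    (hthresh : ∀ T ∈ O \ S, ((T \ S.sup id).card : ℝ) ≤ z / (2 * k)) :
    ((S.sup id).card : ℝ) ≥ (1 - ε) / 2 * ((O.sup id).card : ℝ) := by
  have hcover : (#(O.sup id) : ℝ) ≤ #(S.sup id) + ∑ T ∈ O \ S, (#(T \ S.sup id) : ℝ) := by
    exact_mod_cast card_sup_le_card_sup_add_sum_card_sdiff O S
  have hsum : ∑ T ∈ O \ S, (#(T \ S.sup id) : ℝ) ≤ max z 0 / 2 :=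
    (sum_le_mul_max_zero_of_card_le ((card_le_card sdiff_subset).trans hO) hthresh).trans
      (natCast_mul_max_div_le k z)
  have hz' : max z 0 ≤ (1 + ε) * #(O.sup id) := max_le hz (by positivity)
  linarith

theorem stmt_6 {U : Type*} [DecidableEq U] (O S : Finset (Finset U))
    (k : ℕ) (hk : 0 < k) (hO : O.card ≤ k) (z ε : ℝ) (hε : 0 ≤ ε)
    (hz : z ≤ (1 + ε) * ((O.sup id).card : ℝ))
    (hthresh : ∀ T ∈ O \ S, ((T \ S.sup id).card : ℝ) ≤ z / (2 * k)) :
    ((S.sup id).card : ℝ) ≥ (1 - ε) / 2 * ((O.sup id).card : ℝ) :=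
  stmt_6_general O S k hO z ε hε hz hthresh
end

section
/- Let U be a finite set and let sets O₁,…,O_ℓ be disjoint groups partitioning a collection O of subsets of U (the optimal solution), where |O ∩ G_i| ≤ k_i. Let S be a collection of subsets with union C, and suppose z ≥ |⋃_{T∈O} T|. If for each group i every set T ∈ O_i \ S satisfies |T \ C| ≤ z/((ℓ+1)·k_i), then |C| ≥ |⋃_{T∈O} T| − ℓ·z/(ℓ+1). -/
theorem stmt_7 {U : Type*} [DecidableEq U] (ℓ : ℕ) (hℓ : 0 < ℓ)
    (Og : Fin ℓ → Finset (Finset U)) (O S : Finset (Finset U))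
    (hpart : O = Finset.univ.biUnion Og)
    (hdisj : ∀ i j, i ≠ j → Disjoint (Og i) (Og j))
    (k : Fin ℓ → ℕ) (hkpos : ∀ i, 0 < k i) (hcard : ∀ i, (Og i).card ≤ k i)
    (z : ℝ) (hz : ((O.sup id).card : ℝ) ≤ z)
    (hthresh : ∀ i, ∀ T ∈ Og i \ S,
      ((T \ S.sup id).card : ℝ) ≤ z / ((ℓ + 1) * k i)) :
    ((S.sup id).card : ℝ) ≥ ((O.sup id).card : ℝ) - ℓ * z / (ℓ + 1) := by
  set C := S.sup id with hC
  set D := O.sup id with hD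
  have hz0 : 0 ≤ z := le_trans (Nat.cast_nonneg _) hz
  have hgroup : ∀ i : Fin ℓ, (∑ T ∈ Og i \ S, ((T \ C).card : ℝ)) ≤ z / (ℓ + 1) := by
    intro i
    have hk : (0 : ℝ) < k i := by exact_mod_cast hkpos i
    calc ∑ T ∈ Og i \ S, ((T \ C).card : ℝ)
        ≤ ∑ _T ∈ Og i \ S, z / ((ℓ + 1) * k i) :=
          Finset.sum_le_sum fun T hT => hthresh i T hT
      _ = (Og i \ S).card * (z / ((ℓ + 1) * k i)) := by
          rw [Finset.sum_const, nsmul_eq_mul]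
      _ ≤ k i * (z / ((ℓ + 1) * k i)) := by
          apply mul_le_mul_of_nonneg_right
          · exact_mod_cast le_trans (Finset.card_le_card Finset.sdiff_subset) (hcard i)
          · positivity
      _ = z / (ℓ + 1) := by
          field_simp
  have hsub : D \ C ⊆ (O \ S).biUnion (fun T => T \ C) := by
    intro x hx
    simp only [Finset.mem_sdiff] at hx
    obtain ⟨hxD, hxC⟩ := hx
    rw [hD, Finset.mem_sup] at hxD
    obtain ⟨T, hTO, hxT⟩ := hxD
    have hTS : T ∉ S := fun hTS => hxC (Finset.le_sup (f := id) hTS hxT)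
    exact Finset.mem_biUnion.2 ⟨T, Finset.mem_sdiff.2 ⟨hTO, hTS⟩,
      Finset.mem_sdiff.2 ⟨hxT, hxC⟩⟩
  have h1 : ((D \ C).card : ℝ) ≤ ∑ T ∈ O \ S, ((T \ C).card : ℝ) := by
    calc ((D \ C).card : ℝ) ≤ (((O \ S).biUnion fun T => T \ C).card : ℝ) := by
          exact_mod_cast Finset.card_le_card hsub
      _ ≤ ∑ T ∈ O \ S, ((T \ C).card : ℝ) := by
          exact_mod_cast Finset.card_biUnion_le
  have hOS : O \ S = Finset.univ.biUnion (fun i => Og i \ S) := by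
    subst hpart
    ext T
    simp [Finset.mem_sdiff, Finset.mem_biUnion, and_comm]
  have h2 : (∑ T ∈ O \ S, ((T \ C).card : ℝ))
      = ∑ i : Fin ℓ, ∑ T ∈ Og i \ S, ((T \ C).card : ℝ) := by
    rw [hOS]
    apply Finset.sum_biUnion
    intro i _ j _ hij
    exact (hdisj i j hij).mono Finset.sdiff_subset Finset.sdiff_subset
  have h3 : (∑ i : Fin ℓ, ∑ T ∈ Og i \ S, ((T \ C).card : ℝ)) ≤ ℓ * (z / (ℓ + 1)) := by
    calc (∑ i : Fin ℓ, ∑ T ∈ Og i \ S, ((T \ C).card : ℝ))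
        ≤ ∑ _i : Fin ℓ, z / (ℓ + 1) := Finset.sum_le_sum fun i _ => hgroup i
      _ = ℓ * (z / (ℓ + 1)) := by
          rw [Finset.sum_const, nsmul_eq_mul, Finset.card_univ, Fintype.card_fin]
  have h4 : (D.card : ℝ) ≤ ((D \ C).card : ℝ) + C.card := by
    exact_mod_cast Finset.card_le_card_sdiff_add_card
  have : (ℓ : ℝ) * z / (ℓ + 1) = ℓ * (z / (ℓ + 1)) := by ring
  linarith
end

section
/- Let U be a finite set, S a collection of subsets whose union is C, and O an optimal collection of subsets each with cost w_T ∈ [0, L] whose total cost is at most L. If every T ∈ O \ S satisfies |T \ C| ≤ (2z/3)·(w_T/L) for a real z ≥ 0 with z ≤ (1+ε)·|⋃_{T∈O} T|, then |C| ≥ ((1−2ε)/3)·|⋃_{T∈O} T|. -/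
theorem stmt_10 {U : Type*} [DecidableEq U] (O S : Finset (Finset U))
    (w : Finset U → ℝ) (L z ε : ℝ) (hL : 0 < L) (hε : 0 ≤ ε)
    (hw : ∀ T ∈ O, 0 ≤ w T ∧ w T ≤ L)
    (hbudget : ∑ T ∈ O, w T ≤ L)
    (hz0 : 0 ≤ z) (hz : z ≤ (1 + ε) * ((O.sup id).card : ℝ))
    (hthresh : ∀ T ∈ O \ S, ((T \ S.sup id).card : ℝ) ≤ 2 * z / 3 * (w T / L)) :
    ((S.sup id).card : ℝ) ≥ (1 - 2 * ε) / 3 * ((O.sup id).card : ℝ) := by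
  set C := S.sup id with hC
  set OPT := O.sup id with hOPT
  have hsub : OPT \ C ⊆ (O \ S).biUnion (fun T => T \ C) := by
    intro x hx
    obtain ⟨hxO, hxC⟩ := Finset.mem_sdiff.mp hx
    rw [hOPT, Finset.mem_sup] at hxO
    obtain ⟨T, hTO, hxT⟩ := hxO
    refine Finset.mem_biUnion.mpr ⟨T, Finset.mem_sdiff.mpr ⟨hTO, ?_⟩,
      Finset.mem_sdiff.mpr ⟨hxT, hxC⟩⟩
    intro hTS
    exact hxC (Finset.le_sup (f := id) hTS hxT)
  have h1 : (OPT.card : ℝ) ≤ (C.card : ℝ) + ∑ T ∈ O \ S, ((T \ C).card : ℝ) := by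
    have h3 : OPT.card ≤ (OPT \ C).card + C.card := Finset.card_le_card_sdiff_add_card
    have h4 : (OPT \ C).card ≤ ∑ T ∈ O \ S, (T \ C).card :=
      le_trans (Finset.card_le_card hsub) (Finset.card_biUnion_le)
    push_cast
    have := le_trans h3 (Nat.add_le_add_right h4 _)
    exact_mod_cast le_trans (Nat.cast_le.mpr this) (by push_cast; ring_nf; rfl)
  have h2 : ∑ T ∈ O \ S, ((T \ C).card : ℝ) ≤ 2 * z / 3 := by
    calc ∑ T ∈ O \ S, ((T \ C).card : ℝ)
        ≤ ∑ T ∈ O \ S, 2 * z / 3 * (w T / L) :=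
          Finset.sum_le_sum (fun T hT => hthresh T hT)
      _ ≤ ∑ T ∈ O, 2 * z / 3 * (w T / L) := by
          apply Finset.sum_le_sum_of_subset_of_nonneg (Finset.sdiff_subset)
          intro T hTO _
          have hwT := (hw T hTO).1
          positivity
      _ = 2 * z / 3 * ((∑ T ∈ O, w T) / L) := by
          rw [Finset.sum_div, Finset.mul_sum]
      _ ≤ 2 * z / 3 * 1 := by
          apply mul_le_mul_of_nonneg_left _ (by positivity)
          rw [div_le_one hL]; exact hbudget
      _ = 2 * z / 3 := by ring
  have hO : (0:ℝ) ≤ (OPT.card : ℝ) := by positivity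
  nlinarith [h1, h2, hz, hO]
end

section
/- Suppose a set S (with cost w_S) triggers the budget clause, i.e. |S \ C| ≥ (2z/3)·(w_S/L) and w_S + w(I) > L, where C is the current coverage and I is the current solution, every member T of which satisfied |T added| ≥ (2z/3)·(w_T/L) when it was added, so that |C| ≥ (2z/3)·(w(I)/L). Then max(|C|, |S|) ≥ z/3. -/
theorem stmt_11 {U : Type*} [DecidableEq U] (S C : Finset U)
    (wS wI L z : ℝ) (hL : 0 < L) (hz : 0 ≤ z)
    (hS : ((S \ C).card : ℝ) ≥ 2 * z / 3 * (wS / L))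
    (hover : wS + wI > L)
    (hC : ((C.card : ℝ)) ≥ 2 * z / 3 * (wI / L)) :
    max ((C.card : ℝ)) ((S.card : ℝ)) ≥ z / 3 := by
  have h1 : ((S \ C).card : ℝ) ≤ (S.card : ℝ) := by
    exact_mod_cast Finset.card_le_card (Finset.sdiff_subset)
  have hsum : (C.card : ℝ) + (S.card : ℝ) ≥ 2 * z / 3 := by
    have : 2 * z / 3 * (wS / L) + 2 * z / 3 * (wI / L) ≥ 2 * z / 3 := by
      have he : 2 * z / 3 * (wS / L) + 2 * z / 3 * (wI / L)
          = 2 * z / 3 * ((wS + wI) / L) := by ring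
      have h1 : (wS + wI) / L ≥ 1 := (le_div_iff₀ hL).mpr (by linarith)
      rw [he]
      nlinarith
    linarith
  have h2 := le_max_left ((C.card : ℝ)) ((S.card : ℝ))
  have h3 := le_max_right ((C.card : ℝ)) ((S.card : ℝ))
  linarith
end

section
/- Let S be a uniformly random k-subset of an N-element vertex set and y a fixed subset. Define L_S(y) = max(0, |S ∩ y| − 1). Then E[L_S(y)] ≤ (k|y|/N)²/2. -/
/-!
Write `c = |S ∩ y|`. Pointwise `max 0 (c - 1) = c - 1 + [c = 0]`, so averaging over `S` gives
`E[L] = E|S ∩ y| - 1 + P(S ∩ y = ∅)`. Double counting gives `E|S ∩ y| = k|y|/N`, and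
`P(S ∩ y = ∅) = C(N - |y|, k) / C(N, k) ≤ (1 - |y|/N)^k ≤ 1 - k|y|/N + (k|y|/N)²/2`,
the last step being the second-order Bonferroni bound, proved by induction on `k`.
-/

open Finset

theorem one_sub_pow_le {x : ℝ} (hx₀ : 0 ≤ x) (hx₁ : x ≤ 1) (k : ℕ) :
    (1 - x) ^ k ≤ 1 - k * x + (k * x) ^ 2 / 2 := by
  induction k with
  | zero => simp
  | succ k ih =>
    calc (1 - x) ^ (k + 1) = (1 - x) ^ k * (1 - x) := pow_succ _ _
      _ ≤ (1 - k * x + (k * x) ^ 2 / 2) * (1 - x) := by gcongr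
      _ ≤ 1 - (k + 1 : ℕ) * x + ((k + 1 : ℕ) * x) ^ 2 / 2 := by
        push_cast
        nlinarith [mul_nonneg (mul_nonneg (sq_nonneg (k : ℝ)) hx₀) (sq_nonneg x)]

theorem Nat.sub_sub_mul_le_sub_mul_sub (n m i : ℕ) : (n - m - i) * n ≤ (n - i) * (n - m) := by
  rcases le_or_gt (n - m) i with h | h
  · simp [Nat.sub_eq_zero_of_le h]
  · zify [h.le, (Nat.sub_le n m).trans' h.le, (show m ≤ n by omega)]
    nlinarith [Nat.zero_le (i * m)]

theorem Nat.choose_sub_mul_pow_le (n m k : ℕ) :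
    (n - m).choose k * n ^ k ≤ n.choose k * (n - m) ^ k := by
  have hfactor : (n - m).descFactorial k * n ^ k ≤ n.descFactorial k * (n - m) ^ k := by
    have hpow (a : ℕ) : a ^ k = ∏ _i ∈ range k, a := by simp
    rw [descFactorial_eq_prod_range, descFactorial_eq_prod_range, hpow, hpow, ← prod_mul_distrib,
      ← prod_mul_distrib]
    exact prod_le_prod' fun i _ => sub_sub_mul_le_sub_mul_sub n m i
  rw [descFactorial_eq_factorial_mul_choose, descFactorial_eq_factorial_mul_choose,
    mul_assoc, mul_assoc] at hfactor
  exact Nat.le_of_mul_le_mul_left hfactor (factorial_pos k)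

theorem Nat.cast_choose_sub_le_mul_one_sub_div_pow {n m : ℕ} (hmn : m ≤ n) (k : ℕ) :
    ((n - m).choose k : ℝ) ≤ n.choose k * (1 - m / n) ^ k := by
  rcases n.eq_zero_or_pos with rfl | hn
  · obtain rfl : m = 0 := by omega
    simp
  rw [one_sub_div (by positivity), div_pow, mul_div_assoc', le_div_iff₀ (by positivity)]
  have h := Nat.cast_le (α := ℝ).mpr (Nat.choose_sub_mul_pow_le n m k)
  push_cast [Nat.cast_sub hmn] at h
  exact h

section powersetCard
variable {α : Type*} [DecidableEq α] {s t : Finset α}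

theorem card_filter_mem_powersetCard_succ {a : α} (ha : a ∈ t) (j : ℕ) :
    #{S ∈ t.powersetCard (j + 1) | a ∈ S} = (#t - 1).choose j := by
  simpa using card_filter_powersetCard_subset {a} t (j + 1) (singleton_subset_iff.2 ha) (by simp)

theorem card_filter_disjoint_powersetCard (hst : s ⊆ t) (k : ℕ) :
    #{S ∈ t.powersetCard k | Disjoint S s} = (#t - #s).choose k := by
  have : {S ∈ t.powersetCard k | Disjoint S s} = (t \ s).powersetCard k := by
    ext S
    simp only [mem_filter, mem_powersetCard, subset_sdiff]
    tauto
  rw [this, card_powersetCard, card_sdiff_of_subset hst]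

theorem sum_max_zero_card_inter_sub_one (hst : s ⊆ t) (k : ℕ) :
    ∑ S ∈ t.powersetCard k, max 0 ((#(S ∩ s) : ℝ) - 1)
      = ∑ S ∈ t.powersetCard k, (#(S ∩ s) : ℝ) - (#t).choose k + (#t - #s).choose k := by
  have hmax (c : ℕ) : max 0 ((c : ℝ) - 1) = (c - 1) + if c = 0 then 1 else 0 := by
    rcases Nat.eq_zero_or_pos c with rfl | hc
    · norm_num
    · rw [if_neg hc.ne', add_zero, max_eq_right (sub_nonneg.2 (Nat.one_le_cast.2 hc))]
  simp_rw [hmax, sum_add_distrib, sum_sub_distrib, sum_const, card_powersetCard, sum_boole,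
    card_eq_zero, ← disjoint_iff_inter_eq_empty, card_filter_disjoint_powersetCard hst]
  simp

theorem sum_card_inter_powersetCard (hst : s ⊆ t) (k : ℕ) :
    ∑ S ∈ t.powersetCard k, (#(S ∩ s) : ℝ) = (#t).choose k * (k * #s / #t) := by
  obtain _ | j := k
  · simp
  simp_rw [inter_comm _ s]
  rw [← Nat.cast_sum, sum_card_inter fun a ha => card_filter_mem_powersetCard_succ (hst ha) j]
  obtain h | ⟨n, hn⟩ : #t = 0 ∨ ∃ n, #t = n + 1 := by cases #t <;> simp
  · simp [subset_empty.mp (card_eq_zero.mp h ▸ hst)]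
  · have hchoose := congrArg (Nat.cast : ℕ → ℝ) (Nat.add_one_mul_choose_eq n j)
    push_cast at hchoose
    rw [hn, Nat.add_sub_cancel]
    field_simp
    push_cast
    linear_combination (#s : ℝ) * hchoose

end powersetCard

theorem stmt_15_general {V : Type*} [Fintype V] [DecidableEq V] (N k : ℕ)
    (hN : Fintype.card V = N) (y : Finset V) :
    (∑ S ∈ Finset.univ.powersetCard k, max 0 (((S ∩ y).card : ℝ) - 1))
        / (N.choose k : ℝ)
      ≤ ((k : ℝ) * y.card / N) ^ 2 / 2 := by
  subst hN
  have hy : y ⊆ univ := subset_univ y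
  have hC : (0 : ℝ) ≤ (Fintype.card V).choose k := Nat.cast_nonneg _
  have hx₀ : (0 : ℝ) ≤ #y / Fintype.card V := by positivity
  have hx₁ : (#y : ℝ) / Fintype.card V ≤ 1 :=
    div_le_one_of_le₀ (by exact_mod_cast card_le_univ y) (Nat.cast_nonneg _)
  have hempty := Nat.cast_choose_sub_le_mul_one_sub_div_pow (card_le_univ y) k
  have hpow := mul_le_mul_of_nonneg_left (one_sub_pow_le hx₀ hx₁ k) hC
  refine div_le_of_le_mul₀ hC (by positivity) ?_
  rw [sum_max_zero_card_inter_sub_one hy, sum_card_inter_powersetCard hy, card_univ]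
  linear_combination hempty + hpow

theorem stmt_15 {V : Type*} [Fintype V] [DecidableEq V] (N k : ℕ)
    (hN : Fintype.card V = N) (hk : k ≤ N) (hN0 : 0 < N) (y : Finset V) :
    (∑ S ∈ Finset.univ.powersetCard k, max 0 (((S ∩ y).card : ℝ) - 1))
        / (N.choose k : ℝ)
      ≤ ((k : ℝ) * y.card / N) ^ 2 / 2 :=
  stmt_15_general N k hN y
end

section
/- Let G be a hypergraph on N vertices with hyperedges of size at most d, minimum vertex degree t₁ and maximum vertex degree t₂, so that the total degree sum Σ_{y∈E} |y| ≤ N·t₂. If S is a uniformly random k-subset of vertices and N ≥ 4kd/ε, then Σ_{y∈E} E[L_S(y)] ≤ (ε/8)·k·t₂, where L_S(y) = max(0, |S∩y|−1). -/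
/-! Bound `L_S(y) = max 0 (|S ∩ y| - 1)` by `C(|S ∩ y|, 2)`, the number of pairs of `y` inside `S`.
Double counting gives `E[C(|S ∩ y|, 2)] = C(|y|, 2) · C(k, 2) / C(N, 2) ≤ C(|y|, 2) (k/N)²`, and
`C(|y|, 2) ≤ |y| d / 2`; summing over the edges with `∑ |y| ≤ N t₂` leaves `t₂ k (k d / N) / 2`,
which is at most `ε k t₂ / 8` because `k d / N ≤ ε / 4`. -/

open Finset

lemma Nat.choose_two_mul_sq_le {k n : ℕ} (h : k ≤ n) :
    k.choose 2 * n ^ 2 ≤ n.choose 2 * k ^ 2 := by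
  have hkn : (k : ℚ) ≤ n := by exact_mod_cast h
  have hR : ((k.choose 2 * n ^ 2 : ℕ) : ℚ) ≤ (n.choose 2 * k ^ 2 : ℕ) := by
    push_cast [Nat.cast_choose_two]
    nlinarith [mul_nonneg (mul_nonneg k.cast_nonneg n.cast_nonneg) (sub_nonneg.2 hkn)]
  exact_mod_cast hR

namespace Finset

variable {α : Type*} [DecidableEq α]

lemma powersetCard_inter_eq_filter (S y : Finset α) (s : ℕ) :
    (S ∩ y).powersetCard s = (y.powersetCard s).filter (· ⊆ S) := by
  ext T
  simp only [mem_powersetCard, mem_filter, subset_inter_iff]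
  tauto

lemma sum_choose_card_inter_mul_choose {u y : Finset α} (hy : y ⊆ u) (k s : ℕ) :
    (∑ S ∈ u.powersetCard k, (#(S ∩ y)).choose s) * (#u).choose s
      = (#y).choose s * ((#u).choose k * k.choose s) := by
  rcases lt_or_ge k s with hks | hsk
  · have hzero : ∀ S ∈ u.powersetCard k, (#(S ∩ y)).choose s = 0 := fun S hS =>
      Nat.choose_eq_zero_of_lt <|
        ((card_le_card inter_subset_left).trans (mem_powersetCard.1 hS).2.le).trans_lt hks
    simp [sum_eq_zero hzero, Nat.choose_eq_zero_of_lt hks]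
  have hcount : ∀ T ∈ y.powersetCard s,
      #((u.powersetCard k).filter (T ⊆ ·)) = (#u - s).choose (k - s) := fun T hT => by
    obtain ⟨hTy, hTs⟩ := mem_powersetCard.1 hT
    rw [card_filter_powersetCard_subset T u k (hTy.trans hy) (hTs ▸ hsk), hTs]
  -- count the pairs `(S, T)` with `T` an `s`-subset of `S ∩ y`, first by `S`, then by `T`
  calc (∑ S ∈ u.powersetCard k, (#(S ∩ y)).choose s) * (#u).choose s
      = (∑ T ∈ y.powersetCard s, #((u.powersetCard k).filter (T ⊆ ·))) * (#u).choose s := by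
        simp_rw [← card_powersetCard, powersetCard_inter_eq_filter]
        congr 1
        exact sum_card_bipartiteAbove_eq_sum_card_bipartiteBelow
          (fun (S T : Finset α) => T ⊆ S)
    _ = (#y).choose s * ((#u).choose s * (#u - s).choose (k - s)) := by
        rw [sum_congr rfl hcount, sum_const, card_powersetCard, smul_eq_mul, mul_assoc,
          mul_comm ((#u - s).choose _)]
    _ = (#y).choose s * ((#u).choose k * k.choose s) := by rw [Nat.choose_mul hsk]

lemma sum_choose_two_card_inter_mul_sq_le {u y : Finset α} (hy : y ⊆ u) {k : ℕ}
    (hk : k ≤ #u) :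
    (∑ S ∈ u.powersetCard k, (#(S ∩ y)).choose 2) * #u ^ 2
      ≤ (#y).choose 2 * (#u).choose k * k ^ 2 := by
  rcases Nat.eq_zero_or_pos ((#u).choose 2) with hu | hu
  · have hzero : ∀ S ∈ u.powersetCard k, (#(S ∩ y)).choose 2 = 0 := fun S hS =>
      Nat.choose_eq_zero_of_lt <| ((card_le_card inter_subset_left).trans
        ((mem_powersetCard.1 hS).2.le.trans hk)).trans_lt (Nat.choose_eq_zero_iff.1 hu)
    simp [sum_eq_zero hzero]
  refine Nat.le_of_mul_le_mul_right ?_ hu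
  calc (∑ S ∈ u.powersetCard k, (#(S ∩ y)).choose 2) * #u ^ 2 * (#u).choose 2
      = (#y).choose 2 * (#u).choose k * (k.choose 2 * #u ^ 2) := by
        rw [mul_right_comm, sum_choose_card_inter_mul_choose hy]; ring
    _ ≤ (#y).choose 2 * (#u).choose k * ((#u).choose 2 * k ^ 2) :=
        Nat.mul_le_mul_left _ (Nat.choose_two_mul_sq_le hk)
    _ = (#y).choose 2 * (#u).choose k * k ^ 2 * (#u).choose 2 := by ring

end Finset

lemma max_zero_sub_one_le_choose_two (m : ℕ) : max 0 ((m : ℝ) - 1) ≤ m.choose 2 := by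
  rcases m with _ | _ | m
  · simp
  · simp
  · rw [Nat.cast_choose_two, max_eq_right (by push_cast; linarith)]
    push_cast
    nlinarith

theorem sum_max_card_inter_sub_one_div_choose_le {α : Type*} [Fintype α] [DecidableEq α]
    [Nonempty α] {k d : ℕ} (hk : k ≤ Fintype.card α) {y : Finset α} (hy : #y ≤ d) :
    (∑ S ∈ univ.powersetCard k, max 0 ((#(S ∩ y) : ℝ) - 1)) / (Fintype.card α).choose k
      ≤ #y * d * k ^ 2 / (2 * Fintype.card α ^ 2) := by
  set N := Fintype.card α
  have hC : (0 : ℝ) < N.choose k := by exact_mod_cast Nat.choose_pos hk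
  have hN : (0 : ℝ) < N := by exact_mod_cast Fintype.card_pos
  have hcount : ((∑ S ∈ univ.powersetCard k, (#(S ∩ y)).choose 2) * N ^ 2 : ℝ)
      ≤ (#y).choose 2 * N.choose k * k ^ 2 := by
    exact_mod_cast sum_choose_two_card_inter_mul_sq_le (subset_univ y) (by rwa [card_univ])
  have hpair : ((#y).choose 2 : ℝ) ≤ #y * d / 2 := by
    rw [Nat.cast_choose_two]
    have : (#y : ℝ) ≤ d := by exact_mod_cast hy
    gcongr
    linarith
  rw [div_le_div_iff₀ hC (by positivity)]
  calc (∑ S ∈ univ.powersetCard k, max 0 ((#(S ∩ y) : ℝ) - 1)) * (2 * N ^ 2)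
      ≤ (∑ S ∈ univ.powersetCard k, ((#(S ∩ y)).choose 2 : ℝ)) * (2 * N ^ 2) := by
        gcongr with S
        exact max_zero_sub_one_le_choose_two _
    _ = 2 * (((∑ S ∈ univ.powersetCard k, (#(S ∩ y)).choose 2 : ℕ) : ℝ) * N ^ 2) := by
        push_cast; ring
    _ ≤ 2 * ((#y).choose 2 * N.choose k * k ^ 2) := by gcongr
    _ ≤ 2 * (#y * d / 2 * N.choose k * k ^ 2) := by gcongr
    _ = #y * d * k ^ 2 * N.choose k := by ring

theorem stmt_16 {V : Type*} [Fintype V] [DecidableEq V] (N k d t₂ : ℕ)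
    (hN : Fintype.card V = N) (hk : k ≤ N) (hN0 : 0 < N)
    (E : Finset (Finset V)) (hd : ∀ y ∈ E, y.card ≤ d)
    (hdeg : ∑ y ∈ E, y.card ≤ N * t₂)
    (ε : ℝ) (hε : 0 < ε) (hNbig : (N : ℝ) ≥ 4 * k * d / ε) :
    ∑ y ∈ E, (∑ S ∈ Finset.univ.powersetCard k, max 0 (((S ∩ y).card : ℝ) - 1))
        / (N.choose k : ℝ)
      ≤ ε / 8 * k * t₂ := by
  subst hN
  have : Nonempty V := Fintype.card_pos_iff.1 hN0
  have hNpos : (0 : ℝ) < Fintype.card V := by exact_mod_cast hN0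
  have hdegR : (∑ y ∈ E, (#y : ℝ)) ≤ Fintype.card V * t₂ := by exact_mod_cast hdeg
  have hkd : (k * d / Fintype.card V : ℝ) ≤ ε / 4 := by
    rw [ge_iff_le, div_le_iff₀ hε] at hNbig
    rw [div_le_iff₀ hNpos]
    linarith
  calc _ ≤ ∑ y ∈ E, (#y * d * k ^ 2 / (2 * Fintype.card V ^ 2) : ℝ) :=
        sum_le_sum fun y hy => sum_max_card_inter_sub_one_div_choose_le hk (hd y hy)
    _ = (∑ y ∈ E, (#y : ℝ)) * d * k ^ 2 / (2 * Fintype.card V ^ 2) := by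
        rw [← sum_div, ← sum_mul, ← sum_mul]
    _ ≤ Fintype.card V * t₂ * d * k ^ 2 / (2 * Fintype.card V ^ 2) := by gcongr
    _ = k * t₂ / 2 * (k * d / Fintype.card V) := by field_simp
    _ ≤ k * t₂ / 2 * (ε / 4) := by gcongr
    _ = ε / 8 * k * t₂ := by ring
end
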